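/- Let S be an incomplete matrix with k unspecified entries and M(S,K) the associated block matrix as in the reduction. If PSD rank(M(S,K)) ≤ 2k + 3, then S admits a completion C with PSD rank(C) ≤ 3. -/

import Mathlib

/-!
Take a PSD factorization `M(S,K)_{rc} = tr (B r * C c)` of size `d ≤ 2k + 3`; it exists because
all entries are nonnegative. For PSD matrices a vanishing trace `tr (A * B)` forces `A * B = 0`,
so the zeros of the gadgets give `B a * C b = 0` for distinct gadget indices, `B i * C a = 0`
unless the gadget `a` sits in row `i`, and `B a * C j = 0` unless it sits in column `j`, while
`tr (B a * C a) = K ≠ 0`. Hence there are `2k` vectors `v a` in the range of `C a` and `w a` in the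
row space of `B a` with `w a ⬝ᵥ v b = δ a b`, and the oblique projection `1 - ∑ v a w aᵀ` has rank
`d - 2k ≤ 3`. For a specified entry `(i, j)` every gadget misses row `i` or column `j`, so
`B i * v a = 0` or `w aᵀ * C j = 0`; this makes compressing all `B i`, `C j` through that
projection preserve `tr (B i * C j)`. All `2k` gadget directions are thus removed at once, instead
of one unspecified entry at a time.
-/

open Matrix

noncomputable def PsdRank {α β : Type} [Fintype α] [Fintype β] (A : Matrix α β ℝ) : ℕ :=
  sInf {k : ℕ | ∃ (B : α → Matrix (Fin k) (Fin k) ℝ) (C : β → Matrix (Fin k) (Fin k) ℝ),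
    (∀ i, (B i).PosSemidef) ∧ (∀ j, (C j).PosSemidef) ∧ ∀ i j, A i j = ((B i) * (C j)).trace}

/-- The set of unspecified entries of an incomplete matrix
(entries in `Option ℝ`, with `none` denoting `⊛`). -/
def Unspec {n : ℕ} (S : Matrix (Fin n) (Fin n) (Option ℝ)) : Type :=
  {p : Fin n × Fin n // (S p.1 p.2).isNone}

instance {n : ℕ} (S : Matrix (Fin n) (Fin n) (Option ℝ)) : Fintype (Unspec S) :=
  Subtype.fintype _

instance {n : ℕ} (S : Matrix (Fin n) (Fin n) (Option ℝ)) : DecidableEq (Unspec S) :=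
  Subtype.instDecidableEq

/-- The matrix `𝓜(S,K)`: it agrees with `S` on specified entries, and for each
unspecified entry `e = (i,j)` it carries the gadget `K·P(1)`,
`P(α) = [[α,1,1],[1,1,0],[1,0,1]]`, on rows `{i,e¹,e²}` and columns `{j,e¹,e²}`;
all remaining entries are `0`. -/
def GadgetM {n : ℕ} (S : Matrix (Fin n) (Fin n) (Option ℝ)) (K : ℝ) :
    Matrix (Fin n ⊕ (Unspec S ⊕ Unspec S)) (Fin n ⊕ (Unspec S ⊕ Unspec S)) ℝ :=
  Matrix.of fun r c => match r, c with
    | .inl i, .inl j => (S i j).getD K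
    | .inl i, .inr (.inl e) => if e.val.1 = i then K else 0
    | .inl i, .inr (.inr e) => if e.val.1 = i then K else 0
    | .inr (.inl e), .inl j => if e.val.2 = j then K else 0
    | .inr (.inr e), .inl j => if e.val.2 = j then K else 0
    | .inr (.inl e), .inr (.inl e') => if e = e' then K else 0
    | .inr (.inl _), .inr (.inr _) => 0
    | .inr (.inr _), .inr (.inl _) => 0
    | .inr (.inr e), .inr (.inr e') => if e = e' then K else 0

def IsCompletion {n : ℕ} (S : Matrix (Fin n) (Fin n) (Option ℝ))
    (C : Matrix (Fin n) (Fin n) ℝ) : Prop :=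
  ∀ i j a, S i j = some a → C i j = a

namespace Matrix

variable {l m n ι : Type*}

lemma mul_eq_zero_of_forall_col_or_row_eq_zero {R : Type*} [NonUnitalNonAssocSemiring R]
    [Fintype ι] {A : Matrix m ι R} {D : Matrix ι n R} (h : ∀ a, Aᵀ a = 0 ∨ D a = 0) :
    A * D = 0 := by
  ext i j
  refine Finset.sum_eq_zero fun a _ => ?_
  rcases h a with ha | ha
  · simp [show A i a = 0 from congrFun ha i]
  · simp [ha]

lemma trace_conjTranspose_mul_mul_mul_mul_conjTranspose {R : Type*} [CommRing R] [StarRing R]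
    [Fintype m] [Fintype l] [DecidableEq m] {B C P : Matrix m m R} {F : Matrix m l R}
    {G : Matrix l m R} (hFG : F * G = 1 - P) (hB : Bᴴ = B) (hC : Cᴴ = C)
    (hBPC : B * P * C = 0) :
    (Fᴴ * B * F * (G * C * Gᴴ)).trace = (B * C).trace := by
  have hcycle : (Fᴴ * B * F * (G * C * Gᴴ)).trace = (B * (1 - P) * C * (1 - P)ᴴ).trace := by
    rw [← hFG, conjTranspose_mul]
    simp only [Matrix.mul_assoc]
    rw [trace_mul_comm]
    simp only [Matrix.mul_assoc]
  have hBCP : (B * C * Pᴴ).trace = 0 := by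
    rw [← star_star (B * C * Pᴴ).trace, ← trace_conjTranspose, conjTranspose_mul,
      conjTranspose_mul, conjTranspose_conjTranspose, hB, hC, ← Matrix.mul_assoc,
      trace_mul_cycle, hBPC, trace_zero, star_zero]
  have hexpand : B * (1 - P) * C * (1 - P)ᴴ
      = B * C - B * C * Pᴴ - B * P * C + B * P * C * Pᴴ := by
    simp only [conjTranspose_sub, conjTranspose_one, Matrix.mul_sub, Matrix.sub_mul,
      Matrix.mul_one]
    abel
  rw [hcycle, hexpand, hBPC, Matrix.zero_mul, trace_add, trace_sub, trace_sub, hBCP]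
  simp

section Field

variable {K : Type*} [Field K]

lemma exists_mul_eq_of_rank [Fintype n] [DecidableEq n] (A : Matrix m n K) :
    ∃ (F : Matrix m (Fin A.rank) K) (G : Matrix (Fin A.rank) n K), F * G = A := by
  let e := (Module.finBasisOfFinrankEq K (LinearMap.range A.mulVecLin) rfl).equivFun
  refine ⟨LinearMap.toMatrix' ((LinearMap.range A.mulVecLin).subtype ∘ₗ e.symm.toLinearMap),
    LinearMap.toMatrix' (e.toLinearMap ∘ₗ A.mulVecLin.rangeRestrict), ?_⟩
  rw [← LinearMap.toMatrix'_comp]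
  convert LinearMap.toMatrix'_toLin' A using 2
  exact LinearMap.ext fun x => congrArg Subtype.val (e.symm_apply_apply _)

lemma rank_eq_trace_of_isIdempotentElem [Fintype m] [DecidableEq m] [CharZero K]
    {A : Matrix m m K} (hA : IsIdempotentElem A) : (A.rank : K) = A.trace := by
  have h : IsIdempotentElem (toLin' A) := hA.map toLinAlgEquiv'
  rw [← trace_toLin'_eq, (LinearMap.IsIdempotentElem.isProj_range _ h).trace, rank,
    toLin'_apply']

lemma exists_mul_eq_one_sub_mul [Fintype m] [Fintype ι] [DecidableEq m] [DecidableEq ι]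
    [CharZero K] {V : Matrix m ι K} {W : Matrix ι m K} (hWV : W * V = 1) :
    ∃ r, r + Fintype.card ι = Fintype.card m ∧
      ∃ (F : Matrix m (Fin r) K) (G : Matrix (Fin r) m K), F * G = 1 - V * W := by
  have hVW : V * W * (V * W) = V * W := by
    rw [Matrix.mul_assoc, ← Matrix.mul_assoc W, hWV, Matrix.one_mul]
  have hidem : IsIdempotentElem (1 - V * W) := by
    simp only [IsIdempotentElem, Matrix.mul_sub, Matrix.sub_mul, Matrix.mul_one,
      Matrix.one_mul, hVW, sub_self, sub_zero]
  have htrace : (1 - V * W).trace = (Fintype.card m : K) - Fintype.card ι := by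
    rw [trace_sub, trace_one, trace_mul_comm, hWV, trace_one]
  refine ⟨(1 - V * W).rank, ?_, exists_mul_eq_of_rank _⟩
  exact_mod_cast eq_sub_iff_add_eq.mp ((rank_eq_trace_of_isIdempotentElem hidem).trans htrace)

end Field

section PosSemidef

variable [Fintype m]

lemma PosSemidef.exists_eq_conjTranspose_mul_self {A : Matrix m m ℝ} (hA : A.PosSemidef) :
    ∃ R : Matrix m m ℝ, A = Rᴴ * R := by
  classical
  open scoped MatrixOrder in
  exact CStarAlgebra.nonneg_iff_eq_star_mul_self.mp hA.nonneg

lemma trace_conjTranspose_mul_self_mul_conjTranspose_mul_self (R T : Matrix m m ℝ) :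
    (Rᴴ * R * (Tᴴ * T)).trace = ((T * Rᴴ)ᴴ * (T * Rᴴ)).trace := by
  rw [conjTranspose_mul, conjTranspose_conjTranspose, Matrix.mul_assoc, trace_mul_comm]
  simp only [Matrix.mul_assoc]

lemma PosSemidef.trace_mul_nonneg {A B : Matrix m m ℝ} (hA : A.PosSemidef) (hB : B.PosSemidef) :
    0 ≤ (A * B).trace := by
  obtain ⟨R, rfl⟩ := hA.exists_eq_conjTranspose_mul_self
  obtain ⟨T, rfl⟩ := hB.exists_eq_conjTranspose_mul_self
  rw [trace_conjTranspose_mul_self_mul_conjTranspose_mul_self]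
  exact (posSemidef_conjTranspose_mul_self _).trace_nonneg

lemma PosSemidef.mul_eq_zero_of_trace_mul_eq_zero {A B : Matrix m m ℝ} (hA : A.PosSemidef)
    (hB : B.PosSemidef) (h : (A * B).trace = 0) : A * B = 0 := by
  obtain ⟨R, rfl⟩ := hA.exists_eq_conjTranspose_mul_self
  obtain ⟨T, rfl⟩ := hB.exists_eq_conjTranspose_mul_self
  rw [trace_conjTranspose_mul_self_mul_conjTranspose_mul_self,
    trace_conjTranspose_mul_self_eq_zero_iff] at h
  have hRT : R * Tᴴ = 0 := by simpa using congrArg (·ᴴ) h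
  rw [Matrix.mul_assoc, ← Matrix.mul_assoc R, hRT, Matrix.zero_mul, Matrix.mul_zero]

lemma exists_dotProduct_mul_mul_mulVec_ne_zero {X Y : Matrix m m ℝ} (hX : X.IsHermitian)
    (hY : Y.PosSemidef) (h : (X * Y).trace ≠ 0) : ∃ z, z ⬝ᵥ (X * Y * X) *ᵥ z ≠ 0 := by
  by_contra! h0
  refine h ?_
  suffices Y * X = 0 by rw [trace_mul_comm, this, trace_zero]
  refine mulVec_injective (funext fun z => ?_)
  have hzX : z ᵥ* X = X *ᵥ z := by
    rw [← vecMul_transpose, ← conjTranspose_eq_transpose_of_trivial, hX.eq]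
  have hz : star (X *ᵥ z) ⬝ᵥ Y *ᵥ (X *ᵥ z) = 0 := by
    rw [star_trivial, ← h0 z, ← mulVec_mulVec, ← mulVec_mulVec, dotProduct_mulVec z X, hzX]
  simpa [mulVec_mulVec] using (hY.dotProduct_mulVec_zero_iff _).mp hz

lemma exists_biorthogonal_of_mul_eq_zero [Fintype ι] [DecidableEq ι]
    {X Y : ι → Matrix m m ℝ} (hX : ∀ a, (X a).IsHermitian) (hY : ∀ a, (Y a).PosSemidef)
    (hXY : ∀ a b, a ≠ b → X a * Y b = 0) (htr : ∀ a, (X a * Y a).trace ≠ 0) :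
    ∃ (V : Matrix m ι ℝ) (W : Matrix ι m ℝ), W * V = 1 ∧
      (∀ (B : Matrix m m ℝ) a, B * Y a = 0 → (B * V)ᵀ a = 0) ∧
      ∀ (C : Matrix m m ℝ) a, X a * C = 0 → (W * C) a = 0 := by
  choose z hz using fun a => exists_dotProduct_mul_mul_mulVec_ne_zero (hX a) (hY a) (htr a)
  let c a := z a ⬝ᵥ (X a * Y a * X a) *ᵥ z a
  let v a := (c a)⁻¹ • (Y a * X a) *ᵥ z a
  refine ⟨(of v)ᵀ, of fun a => z a ᵥ* X a, ?_, fun B a hB => ?_, fun C a hC => ?_⟩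
  · ext a b
    have hab : ((of fun a => z a ᵥ* X a) * (of v)ᵀ) a b
        = (c b)⁻¹ * (z a ⬝ᵥ (X a * Y b * X b) *ᵥ z b) := by
      show (z a ᵥ* X a) ⬝ᵥ v b = _
      simp only [v, dotProduct_smul, smul_eq_mul, dotProduct_mulVec, vecMul_vecMul,
        Matrix.mul_assoc]
    rcases eq_or_ne a b with rfl | hne
    · rw [hab, one_apply_eq, inv_mul_cancel₀ (hz a)]
    · rw [hab, one_apply_ne hne, hXY a b hne, Matrix.zero_mul, zero_mulVec, dotProduct_zero,
        mul_zero]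
  · rw [transpose_mul, transpose_transpose]
    show v a ᵥ* Bᵀ = 0
    rw [vecMul_transpose, mulVec_smul, mulVec_mulVec, ← Matrix.mul_assoc, hB,
      Matrix.zero_mul, zero_mulVec, smul_zero]
  · show (z a ᵥ* X a) ᵥ* C = 0
    rw [vecMul_vecMul, hC, vecMul_zero]

end PosSemidef

end Matrix

section PsdFactorization

variable {α β : Type}

def HasPsdFactorization (A : Matrix α β ℝ) (k : ℕ) : Prop :=
  ∃ (B : α → Matrix (Fin k) (Fin k) ℝ) (C : β → Matrix (Fin k) (Fin k) ℝ),
    (∀ i, (B i).PosSemidef) ∧ (∀ j, (C j).PosSemidef) ∧ ∀ i j, A i j = ((B i) * (C j)).trace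

lemma psdRank_le_of_hasPsdFactorization [Fintype α] [Fintype β] {A : Matrix α β ℝ} {k : ℕ}
    (h : HasPsdFactorization A k) : PsdRank A ≤ k :=
  Nat.sInf_le h

lemma hasPsdFactorization_psdRank [Fintype α] [Fintype β] {A : Matrix α β ℝ} {k : ℕ}
    (h : HasPsdFactorization A k) : HasPsdFactorization A (PsdRank A) :=
  Nat.sInf_mem (s := {k | HasPsdFactorization A k}) ⟨k, h⟩

lemma hasPsdFactorization_card_of_nonneg [Fintype β] {A : Matrix α β ℝ}
    (hA : ∀ i j, 0 ≤ A i j) : HasPsdFactorization A (Fintype.card β) := by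
  classical
  let e := Fintype.equivFin β
  refine ⟨fun i => diagonal fun t => A i (e.symm t), fun j => diagonal (Pi.single (e j) 1),
    fun i => posSemidef_diagonal_iff.mpr fun t => hA _ _,
    fun j => posSemidef_diagonal_iff.mpr fun t => ?_, fun i j => ?_⟩
  · by_cases h : t = e j <;> simp [h]
  · simp [diagonal_mul_diagonal, trace_diagonal, Pi.single_apply]

end PsdFactorization

section Gadget

variable {n : ℕ} {S : Matrix (Fin n) (Fin n) (Option ℝ)} {K : ℝ}

def gadgetPos (a : Unspec S ⊕ Unspec S) : Fin n × Fin n :=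
  (a.elim id id : Unspec S).val

lemma gadgetPos_ne_of_eq_some {i j : Fin n} {x : ℝ} (hx : S i j = some x)
    (a : Unspec S ⊕ Unspec S) : (gadgetPos a).1 ≠ i ∨ (gadgetPos a).2 ≠ j := by
  by_contra! h
  have hnone : (S (gadgetPos a).1 (gadgetPos a).2).isNone := by
    rcases a with e | e <;> exact e.property
  rw [h.1, h.2, hx] at hnone
  exact Bool.false_ne_true hnone

lemma gadgetM_nonneg (hK : 0 ≤ K) (hS : ∀ i j x, S i j = some x → 0 ≤ x) :
    ∀ r c, 0 ≤ GadgetM S K r c := by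
  rintro (i | e | e) (j | f | f) <;> simp only [GadgetM, of_apply] <;> try split_ifs
  all_goals first
    | exact hK
    | exact le_rfl
    | (rcases hij : S i j with _ | x
       · exact hK
       · exact hS i j x hij)

lemma gadgetM_inl_inl_of_eq_some {i j : Fin n} {x : ℝ} (hx : S i j = some x) :
    GadgetM S K (.inl i) (.inl j) = x := by
  simp [GadgetM, hx]

lemma gadgetM_inr_inr_self (a : Unspec S ⊕ Unspec S) : GadgetM S K (.inr a) (.inr a) = K := by
  rcases a with e | e <;> simp [GadgetM]

lemma gadgetM_inr_inr_of_ne {a b : Unspec S ⊕ Unspec S} (hab : a ≠ b) :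
    GadgetM S K (.inr a) (.inr b) = 0 := by
  rcases a with e | e <;> rcases b with f | f <;> simp_all [GadgetM]

lemma gadgetM_inl_inr_of_ne {i : Fin n} {a : Unspec S ⊕ Unspec S} (h : (gadgetPos a).1 ≠ i) :
    GadgetM S K (.inl i) (.inr a) = 0 := by
  rcases a with e | e <;> simp only [gadgetPos, Sum.elim_inl, Sum.elim_inr, id] at h <;>
    simp [GadgetM, h]

lemma gadgetM_inr_inl_of_ne {j : Fin n} {a : Unspec S ⊕ Unspec S} (h : (gadgetPos a).2 ≠ j) :
    GadgetM S K (.inr a) (.inl j) = 0 := by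
  rcases a with e | e <;> simp only [gadgetPos, Sum.elim_inl, Sum.elim_inr, id] at h <;>
    simp [GadgetM, h]

end Gadget

theorem completion_of_psdRank_gadget {n : ℕ}
    (S : Matrix (Fin n) (Fin n) (Option ℝ)) (K : ℕ) (hK : 0 < K)
    (hSnonneg : ∀ i j a, S i j = some a → (0 : ℝ) ≤ a)
    (hM : PsdRank (GadgetM S (K : ℝ)) ≤ 2 * Fintype.card (Unspec S) + 3) :
    ∃ C : Matrix (Fin n) (Fin n) ℝ, IsCompletion S C ∧
      (∀ i j, 0 ≤ C i j) ∧ PsdRank C ≤ 3 := by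
  obtain ⟨B, C, hB, hC, hBC⟩ := hasPsdFactorization_psdRank
    (hasPsdFactorization_card_of_nonneg (gadgetM_nonneg K.cast_nonneg hSnonneg))
  have hmul : ∀ r c, GadgetM S K r c = 0 → B r * C c = 0 := fun r c h =>
    (hB r).mul_eq_zero_of_trace_mul_eq_zero (hC c) (by rw [← hBC, h])
  obtain ⟨V, W, hWV, hV, hW⟩ := exists_biorthogonal_of_mul_eq_zero
    (X := fun a => B (.inr a)) (Y := fun a => C (.inr a)) (fun _ => (hB _).isHermitian)
    (fun _ => hC _) (fun _ _ hab => hmul _ _ (gadgetM_inr_inr_of_ne hab))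
    (fun a => by rw [← hBC, gadgetM_inr_inr_self]; exact_mod_cast hK.ne')
  obtain ⟨r, hr, F, G, hFG⟩ := exists_mul_eq_one_sub_mul hWV
  have hBF i : (Fᴴ * B (.inl i) * F).PosSemidef := (hB _).conjTranspose_mul_mul_same F
  have hCG j : (G * C (.inl j) * Gᴴ).PosSemidef := (hC _).mul_mul_conjTranspose_same G
  refine ⟨of fun i j => (Fᴴ * B (.inl i) * F * (G * C (.inl j) * Gᴴ)).trace,
    fun i j x hx => ?_, fun i j => (hBF i).trace_mul_nonneg (hCG j), ?_⟩
  · have hBVWC : B (.inl i) * (V * W) * C (.inl j) = 0 := by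
      rw [← Matrix.mul_assoc, Matrix.mul_assoc]
      refine mul_eq_zero_of_forall_col_or_row_eq_zero fun a => ?_
      rcases gadgetPos_ne_of_eq_some hx a with h | h
      · exact .inl (hV _ a (hmul _ _ (gadgetM_inl_inr_of_ne h)))
      · exact .inr (hW _ a (hmul _ _ (gadgetM_inr_inl_of_ne h)))
    rw [of_apply, trace_conjTranspose_mul_mul_mul_mul_conjTranspose hFG (hB _).isHermitian.eq
      (hC _).isHermitian.eq hBVWC, ← hBC, gadgetM_inl_inl_of_eq_some hx]
  · refine (psdRank_le_of_hasPsdFactorization ⟨_, _, hBF, hCG, fun _ _ => rfl⟩).trans ?_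
    rw [Fintype.card_sum, Fintype.card_fin] at hr
    omega
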